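/- Semi-desired region connectivity (Theorem 3): Let p_1, …, p_N ∈ ℝ² be sensor positions whose communication graph (edges between points within distance R_c) is connected, and let T be a spanning tree of this graph. Suppose new positions q_1, …, q_N satisfy q_n ∈ ⋂_{m : {m,n} ∈ T} B((p_m + p_n)/2, R_c/2) for every n. Then the communication graph of q_1, …, q_N (edges between points within distance R_c) is connected. -/
import Mathlib


/-- The communication graph: two distinct sensors are adjacent iff within range `Rc`. -/
def commGraph {N : ℕ} (Rc : ℝ) (p : Fin N → EuclideanSpace ℝ (Fin 2)) :
    SimpleGraph (Fin N) :=
  SimpleGraph.fromRel (fun m n => dist (p m) (p n) ≤ Rc)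

theorem semi_desired_region_preserves_connectivity
    (N : ℕ) (Rc : ℝ) (hRc : 0 < Rc)
    (p q : Fin N → EuclideanSpace ℝ (Fin 2))
    (hconn : (commGraph Rc p).Connected)
    (T : SimpleGraph (Fin N)) (hTsub : T ≤ commGraph Rc p) (hTree : T.IsTree)
    (hmove : ∀ n m, T.Adj m n →
      q n ∈ Metric.closedBall (midpoint ℝ (p m) (p n)) (Rc / 2)) :
    (commGraph Rc q).Connected := by
  have hT : T ≤ commGraph Rc q := by
    intro a b hab
    have hb := hmove b a hab
    have ha := hmove a b hab.symm
    rw [Metric.mem_closedBall] at ha hb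
    rw [midpoint_comm] at ha
    refine ⟨hab.ne, Or.inl ?_⟩
    calc dist (q a) (q b) ≤ dist (q a) (midpoint ℝ (p a) (p b))
          + dist (midpoint ℝ (p a) (p b)) (q b) := dist_triangle _ _ _
      _ ≤ Rc / 2 + Rc / 2 := by
          gcongr
          rw [dist_comm]; exact hb
      _ = Rc := by ring
  exact (hTree.isConnected).mono hT
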